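/- The head-reduction relation →h on terms of the pair pattern calculus is deterministic: if t →h u1 and t →h u2, then u1 = u2. -/
import Mathlib


/-! Patterns and terms of the pair pattern calculus -/

inductive Pat : Type
  | pvar : ℕ → Pat
  | ppair : Pat → Pat → Pat

def Pat.vars : Pat → Finset ℕ
  | .pvar x => {x}
  | .ppair p q => p.vars ∪ q.vars

/-- A pattern is linear if every variable occurs at most once. -/
inductive Pat.Linear : Pat → Prop
  | pvar (x : ℕ) : Pat.Linear (.pvar x)
  | ppair {p q : Pat} : Pat.Linear p → Pat.Linear q →
      Disjoint p.vars q.vars → Pat.Linear (.ppair p q)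

inductive Term : Type
  | tvar : ℕ → Term
  | abs : Pat → Term → Term
  | tpair : Term → Term → Term
  | app : Term → Term → Term
  | sub : Term → Pat → Term → Term   -- explicit matching t[p/u]

def Term.fv : Term → Finset ℕ
  | .tvar x => {x}
  | .abs p t => t.fv \ p.vars
  | .tpair t u => t.fv ∪ u.fv
  | .app t u => t.fv ∪ u.fv
  | .sub t p u => (t.fv \ p.vars) ∪ u.fv

/-- Substitution t{x:=u}. -/
def Term.subst : Term → ℕ → Term → Term
  | .tvar y, x, u => if y = x then u else .tvar y
  | .abs p t, x, u => if x ∈ p.vars then .abs p t else .abs p (t.subst x u)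
  | .tpair t v, x, u => .tpair (t.subst x u) (v.subst x u)
  | .app t v, x, u => .app (t.subst x u) (v.subst x u)
  | .sub t p v, x, u => .sub (if x ∈ p.vars then t else t.subst x u) p (v.subst x u)

/-! List contexts L ::= □ | L[p/u] -/

abbrev LCtx := List (Pat × Term)

def LCtx.bv (L : LCtx) : Finset ℕ := L.foldr (fun pr s => pr.1.vars ∪ s) ∅

def LCtx.fill : LCtx → Term → Term
  | [], t => t
  | (p, u) :: L, t => .sub (LCtx.fill L t) p u

/-- t is an abstraction possibly under a list of explicit matchings: t = L⟨λp.b⟩ -/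
def IsAbsL (t : Term) : Prop := ∃ (L : LCtx) (p : Pat) (b : Term), t = L.fill (.abs p b)

/-- t is a pair possibly under a list of explicit matchings: t = L⟨⟨u,v⟩⟩ -/
def IsPairL (t : Term) : Prop := ∃ (L : LCtx) (u v : Term), t = L.fill (.tpair u v)

/-- Head normal forms: exactly the terms irreducible by head reduction. -/
inductive HNF : Term → Prop
  | tvar (x : ℕ) : HNF (.tvar x)
  | tpair (t u : Term) : HNF (.tpair t u)
  | abs {t : Term} (p : Pat) : HNF t → HNF (.abs p t)
  | app {t : Term} (u : Term) : HNF t → ¬ IsAbsL t → HNF (.app t u)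
  | sub {t u : Term} (p q : Pat) : HNF t → HNF u → ¬ IsPairL u →
      HNF (.sub t (.ppair p q) u)

/-- Kinds of head-reduction steps: beta (b), substitution (e), matching (m). -/
inductive Kind : Type | b | e | m

/-- The deterministic head-reduction strategy. -/
inductive HeadStep : Kind → Term → Term → Prop
  | beta {L : LCtx} {p : Pat} {t u : Term} :
      Disjoint L.bv u.fv →
      HeadStep .b (.app (L.fill (.abs p t)) u) (L.fill (.sub t p u))
  | hmatch {t : Term} {L : LCtx} {p₁ p₂ : Pat} {u₁ u₂ : Term} :
      HNF t → Disjoint L.bv t.fv →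
      HeadStep .m (.sub t (.ppair p₁ p₂) (L.fill (.tpair u₁ u₂)))
        (L.fill (.sub (.sub t p₁ u₁) p₂ u₂))
  | esub {t : Term} {x : ℕ} {u : Term} :
      HNF t → HeadStep .e (.sub t (.pvar x) u) (t.subst x u)
  | absC {k : Kind} {t t' : Term} (p : Pat) :
      HeadStep k t t' → HeadStep k (.abs p t) (.abs p t')
  | appC {k : Kind} {t t' : Term} (u : Term) :
      HeadStep k t t' → ¬ IsAbsL t → HeadStep k (.app t u) (.app t' u)
  | subC {k : Kind} {t t' : Term} (p : Pat) (u : Term) :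
      HeadStep k t t' → HeadStep k (.sub t p u) (.sub t' p u)
  | subArg {k : Kind} {t u u' : Term} (p q : Pat) :
      HNF t → ¬ IsPairL u → HeadStep k u u' →
      HeadStep k (.sub t (.ppair p q) u) (.sub t (.ppair p q) u')

/-- Head-reduction sequences counting the number of b-, e- and m-steps. -/
inductive HeadRed : ℕ → ℕ → ℕ → Term → Term → Prop
  | refl (t : Term) : HeadRed 0 0 0 t t
  | bstep {t t' u : Term} {b e m : ℕ} :
      HeadStep .b t t' → HeadRed b e m t' u → HeadRed (b + 1) e m t u
  | estep {t t' u : Term} {b e m : ℕ} :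
      HeadStep .e t t' → HeadRed b e m t' u → HeadRed b (e + 1) m t u
  | mstep {t t' u : Term} {b e m : ℕ} :
      HeadStep .m t t' → HeadRed b e m t' u → HeadRed b e (m + 1) t u

/-- The non-deterministic reduction →p at a distance (contextual closure). -/
inductive PStep : Term → Term → Prop
  | beta {L : LCtx} {p : Pat} {t u : Term} :
      Disjoint L.bv u.fv →
      PStep (.app (L.fill (.abs p t)) u) (L.fill (.sub t p u))
  | pmatch {t : Term} {L : LCtx} {p₁ p₂ : Pat} {u₁ u₂ : Term} :
      Disjoint L.bv t.fv →
      PStep (.sub t (.ppair p₁ p₂) (L.fill (.tpair u₁ u₂)))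
        (L.fill (.sub (.sub t p₁ u₁) p₂ u₂))
  | esub {t : Term} {x : ℕ} {u : Term} :
      PStep (.sub t (.pvar x) u) (t.subst x u)
  | absC {t t' : Term} (p : Pat) : PStep t t' → PStep (.abs p t) (.abs p t')
  | appL {t t' : Term} (u : Term) : PStep t t' → PStep (.app t u) (.app t' u)
  | appR {u u' : Term} (t : Term) : PStep u u' → PStep (.app t u) (.app t u')
  | pairL {t t' : Term} (u : Term) : PStep t t' → PStep (.tpair t u) (.tpair t' u)
  | pairR {u u' : Term} (t : Term) : PStep u u' → PStep (.tpair t u) (.tpair t u')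
  | subL {t t' : Term} (p : Pat) (u : Term) : PStep t t' → PStep (.sub t p u) (.sub t' p u)
  | subR {u u' : Term} (t : Term) (p : Pat) : PStep u u' → PStep (.sub t p u) (.sub t p u')

/-- The calculus Λp with explicit commuting conversions (contextual closure). -/
inductive LpStep : Term → Term → Prop
  | beta {p : Pat} {t u : Term} : LpStep (.app (.abs p t) u) (.sub t p u)
  | lmatch {t : Term} {p₁ p₂ : Pat} {u₁ u₂ : Term} :
      LpStep (.sub t (.ppair p₁ p₂) (.tpair u₁ u₂)) (.sub (.sub t p₁ u₁) p₂ u₂)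
  | esub {t : Term} {x : ℕ} {u : Term} :
      LpStep (.sub t (.pvar x) u) (t.subst x u)
  | comm1 {t : Term} {p : Pat} {v u : Term} :
      Disjoint u.fv p.vars →
      LpStep (.app (.sub t p v) u) (.sub (.app t u) p v)
  | comm2 {t : Term} {p₁ p₂ : Pat} {u : Term} {q : Pat} {v : Term} :
      Disjoint t.fv q.vars →
      LpStep (.sub t (.ppair p₁ p₂) (.sub u q v)) (.sub (.sub t (.ppair p₁ p₂) u) q v)
  | absC {t t' : Term} (p : Pat) : LpStep t t' → LpStep (.abs p t) (.abs p t')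
  | appL {t t' : Term} (u : Term) : LpStep t t' → LpStep (.app t u) (.app t' u)
  | appR {u u' : Term} (t : Term) : LpStep u u' → LpStep (.app t u) (.app t u')
  | pairL {t t' : Term} (u : Term) : LpStep t t' → LpStep (.tpair t u) (.tpair t' u)
  | pairR {u u' : Term} (t : Term) : LpStep u u' → LpStep (.tpair t u) (.tpair t u')
  | subL {t t' : Term} (p : Pat) (u : Term) : LpStep t t' → LpStep (.sub t p u) (.sub t' p u)
  | subR {u u' : Term} (t : Term) (p : Pat) : LpStep u u' → LpStep (.sub t p u) (.sub t p u')

/-- Head clashes: a pair (under matchings) applied to an argument, or a pair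
pattern matched against an abstraction (under matchings); closed under head positions. -/
inductive HasClash : Term → Prop
  | appPair {t : Term} (u : Term) : IsPairL t → HasClash (.app t u)
  | matchAbs {u : Term} (t : Term) (p q : Pat) :
      IsAbsL u → HasClash (.sub t (.ppair p q) u)
  | abs {t : Term} (p : Pat) : HasClash t → HasClash (.abs p t)
  | appL {t : Term} (u : Term) : HasClash t → HasClash (.app t u)
  | subL {t : Term} (p : Pat) (u : Term) : HasClash t → HasClash (.sub t p u)
  | subR {u : Term} (t : Term) (p q : Pat) :
      HasClash u → HasClash (.sub t (.ppair p q) u)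

/-! Canonical forms -/

mutual
  /-- Pure canonical forms N ::= x | N t | N[⟨p₁,p₂⟩/N]. -/
  inductive PureCanonical : Term → Prop
    | tvar (x : ℕ) : PureCanonical (.tvar x)
    | app {t : Term} (u : Term) : PureCanonical t → PureCanonical (.app t u)
    | sub {t u : Term} (p q : Pat) : PureCanonical t → PureCanonical u →
        PureCanonical (.sub t (.ppair p q) u)
  /-- Canonical forms M ::= λp.M | ⟨t,t'⟩ | M[⟨p₁,p₂⟩/N] | N. -/
  inductive Canonical : Term → Prop
    | abs {t : Term} (p : Pat) : Canonical t → Canonical (.abs p t)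
    | tpair (t u : Term) : Canonical (.tpair t u)
    | sub {t u : Term} (p q : Pat) : Canonical t → PureCanonical u →
        Canonical (.sub t (.ppair p q) u)
    | pure {t : Term} : PureCanonical t → Canonical t
end

/-- Size of (canonical) terms. -/
def csize : Term → ℕ
  | .tvar _ => 0
  | .tpair _ _ => 1
  | .app t _ => csize t + 1
  | .abs _ t => csize t + 1
  | .sub t _ u => csize t + csize u + 1

/-! Typing contexts (maps from variables to multisets of types, as lists) -/

abbrev Ctx (α : Type) := ℕ → List α

def Ctx.and {α : Type} (Γ Δ : Ctx α) : Ctx α := fun x => Γ x ++ Δ x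
def Ctx.empty {α : Type} : Ctx α := fun _ => []
def Ctx.single {α : Type} (x : ℕ) (A : List α) : Ctx α := fun y => if y = x then A else []
def Ctx.restrict {α : Type} (Γ : Ctx α) (s : Finset ℕ) : Ctx α :=
  fun x => if x ∈ s then Γ x else []
def Ctx.minus {α : Type} (Γ : Ctx α) (s : Finset ℕ) : Ctx α :=
  fun x => if x ∈ s then [] else Γ x
def Ctx.update {α : Type} (Γ : Ctx α) (x : ℕ) (A : List α) : Ctx α :=
  fun y => if y = x then A else Γ y

/-! System U: non-idempotent intersection types for the pattern calculus,
    judgments carry the size of the derivation. -/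

inductive UTy : Type
  | base : UTy
  | prod : List UTy → List UTy → UTy
  | arr : List UTy → UTy → UTy

/-- Pattern typing for system U (with derivation size). -/
inductive UPat : Ctx UTy → Pat → List UTy → ℕ → Prop
  | pvar (x : ℕ) (A : List UTy) : UPat (Ctx.single x A) (.pvar x) A 1
  | ppair {Γ Δ : Ctx UTy} {p q : Pat} {A B : List UTy} {n m : ℕ} :
      UPat Γ p A n → UPat Δ q B m → Disjoint p.vars q.vars →
      UPat (Γ.and Δ) (.ppair p q) [.prod A B] (n + m + 1)

mutual
  /-- Term typing in system U with a type; last index is the size of the derivation. -/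
  inductive UJ : Ctx UTy → Term → UTy → ℕ → Prop
    | ax (x : ℕ) (σ : UTy) : UJ (Ctx.single x [σ]) (.tvar x) σ 1
    | abs {Γ : Ctx UTy} {t : Term} {σ : UTy} {n : ℕ} {p : Pat} {A : List UTy} {np : ℕ} :
        UJ Γ t σ n → UPat (Γ.restrict p.vars) p A np →
        UJ (Γ.minus p.vars) (.abs p t) (.arr A σ) (n + np + 1)
    | app {Γ Δ : Ctx UTy} {t u : Term} {A : List UTy} {σ : UTy} {n m : ℕ} :
        UJ Γ t (.arr A σ) n → UJM Δ u A m →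
        UJ (Γ.and Δ) (.app t u) σ (n + m + 1)
    | pair {Γ Δ : Ctx UTy} {t u : Term} {A B : List UTy} {n m : ℕ} :
        UJM Γ t A n → UJM Δ u B m →
        UJ (Γ.and Δ) (.tpair t u) (.prod A B) (n + m + 1)
    | mtch {Γ Δ : Ctx UTy} {t u : Term} {σ : UTy} {p : Pat} {A : List UTy} {n np m : ℕ} :
        UJ Γ t σ n → UPat (Γ.restrict p.vars) p A np → UJM Δ u A m →
        UJ ((Γ.minus p.vars).and Δ) (.sub t p u) σ (n + np + m + 1)
  /-- Term typing in system U with a multiset type (the many rule). -/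
  inductive UJM : Ctx UTy → Term → List UTy → ℕ → Prop
    | nil (t : Term) : UJM Ctx.empty t [] 0
    | cons {Γ Δ : Ctx UTy} {t : Term} {σ : UTy} {A : List UTy} {n m : ℕ} :
        UJ Γ t σ n → UJM Δ t A m → UJM (Γ.and Δ) t (σ :: A) (n + m)
end

/-! System E: tight types with counters (b,e,m,f). -/

inductive ETy : Type
  | tN : ETy                       -- •_N
  | tM : ETy                       -- •_M
  | prod : List ETy → List ETy → ETy
  | arr : List ETy → ETy → ETy

def ETy.Tight : ETy → Prop
  | .tN => True
  | .tM => True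
  | .prod _ _ => False
  | .arr _ _ => False

def TightL (A : List ETy) : Prop := ∀ σ ∈ A, σ.Tight
def TightCtx (Γ : Ctx ETy) : Prop := ∀ x, TightL (Γ x)

/-- Names of the last rule of a system E term derivation. -/
inductive ERule : Type
  | ax | abs | absP | app | appP | pair | pairP | mtch

/-- Pattern typing for system E, with counters (e,m,f). -/
inductive EPat : Ctx ETy → Pat → List ETy → ℕ → ℕ → ℕ → Prop
  | pvar (x : ℕ) (A : List ETy) : EPat (Ctx.single x A) (.pvar x) A 1 0 0
  | ppair {Γ Δ : Ctx ETy} {p q : Pat} {A B : List ETy} {e₁ m₁ f₁ e₂ m₂ f₂ : ℕ} :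
      EPat Γ p A e₁ m₁ f₁ → EPat Δ q B e₂ m₂ f₂ → Disjoint p.vars q.vars →
      EPat (Γ.and Δ) (.ppair p q) [.prod A B] (e₁ + e₂) (1 + m₁ + m₂) (f₁ + f₂)
  | ppat {Γ : Ctx ETy} (p q : Pat) :
      (∀ x, Γ x ≠ [] → x ∈ (Pat.ppair p q).vars) → TightCtx Γ →
      EPat Γ (.ppair p q) [.tN] 0 0 1

mutual
  /-- Term typing in system E, tagged by the last rule used,
      with counters (b,e,m,f). -/
  inductive EJ : ERule → Ctx ETy → Term → ETy → ℕ → ℕ → ℕ → ℕ → Prop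
    | ax (x : ℕ) (σ : ETy) : EJ .ax (Ctx.single x [σ]) (.tvar x) σ 0 0 0 0
    | abs {r : ERule} {Γ : Ctx ETy} {t : Term} {σ : ETy} {b e m f : ℕ}
        {p : Pat} {A : List ETy} {ep mp fp : ℕ} :
        EJ r Γ t σ b e m f → EPat (Γ.restrict p.vars) p A ep mp fp →
        EJ .abs (Γ.minus p.vars) (.abs p t) (.arr A σ) (b + 1) (e + ep) (m + mp) (f + fp)
    | absP {r : ERule} {Γ : Ctx ETy} {t : Term} {σ : ETy} {b e m f : ℕ} {p : Pat} :
        EJ r Γ t σ b e m f → σ.Tight → TightCtx (Γ.restrict p.vars) →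
        EJ .absP (Γ.minus p.vars) (.abs p t) .tM b e m (f + 1)
    | app {r : ERule} {Γ Δ : Ctx ETy} {t u : Term} {A : List ETy} {σ : ETy}
        {bt et mt ft bu eu mu fu : ℕ} :
        EJ r Γ t (.arr A σ) bt et mt ft → EJM Δ u A bu eu mu fu →
        EJ .app (Γ.and Δ) (.app t u) σ (bt + bu) (et + eu) (mt + mu) (ft + fu)
    | appP {r : ERule} {Γ : Ctx ETy} {t : Term} (u : Term) {b e m f : ℕ} :
        EJ r Γ t .tN b e m f → EJ .appP Γ (.app t u) .tN b e m (f + 1)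
    | pair {Γ Δ : Ctx ETy} {t u : Term} {A B : List ETy}
        {bt et mt ft bu eu mu fu : ℕ} :
        EJM Γ t A bt et mt ft → EJM Δ u B bu eu mu fu →
        EJ .pair (Γ.and Δ) (.tpair t u) (.prod A B) (bt + bu) (et + eu) (mt + mu) (ft + fu)
    | pairP (t u : Term) : EJ .pairP Ctx.empty (.tpair t u) .tM 0 0 0 1
    | mtch {r : ERule} {Γ Δ : Ctx ETy} {t u : Term} {σ : ETy} {p : Pat}
        {A : List ETy} {bt et mt ft ep mp fp bu eu mu fu : ℕ} :
        EJ r Γ t σ bt et mt ft → EPat (Γ.restrict p.vars) p A ep mp fp →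
        EJM Δ u A bu eu mu fu →
        EJ .mtch ((Γ.minus p.vars).and Δ) (.sub t p u) σ
          (bt + bu) (et + eu + ep) (mt + mu + mp) (ft + fu + fp)
  /-- Term typing in system E with a multiset type (the many rule). -/
  inductive EJM : Ctx ETy → Term → List ETy → ℕ → ℕ → ℕ → ℕ → Prop
    | nil (t : Term) : EJM Ctx.empty t [] 0 0 0 0
    | cons {r : ERule} {Γ Δ : Ctx ETy} {t : Term} {σ : ETy} {A : List ETy}
        {b e m f b' e' m' f' : ℕ} :
        EJ r Γ t σ b e m f → EJM Δ t A b' e' m' f' →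
        EJM (Γ.and Δ) t (σ :: A) (b + b') (e + e') (m + m') (f + f')
end

lemma fill_abs_inj : ∀ (L L' : LCtx) (p p' : Pat) (t t' : Term),
    LCtx.fill L (.abs p t) = LCtx.fill L' (.abs p' t') → L = L' ∧ p = p' ∧ t = t' := by
  intro L
  induction L with
  | nil =>
    intro L' p p' t t' h
    cases L' with
    | nil => simp [LCtx.fill] at h; exact ⟨rfl, h.1, h.2⟩
    | cons hd tl => obtain ⟨q, v⟩ := hd; simp [LCtx.fill] at h
  | cons hd tl ih =>
    obtain ⟨q, v⟩ := hd
    intro L' p p' t t' h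
    cases L' with
    | nil => simp [LCtx.fill] at h
    | cons hd' tl' =>
      obtain ⟨q', v'⟩ := hd'
      simp only [LCtx.fill, Term.sub.injEq] at h
      obtain ⟨h1, h2, h3⟩ := h
      obtain ⟨e1, e2, e3⟩ := ih tl' p p' t t' h1
      exact ⟨by rw [e1, h2, h3], e2, e3⟩

lemma fill_pair_inj : ∀ (L L' : LCtx) (a a' b b' : Term),
    LCtx.fill L (.tpair a b) = LCtx.fill L' (.tpair a' b') → L = L' ∧ a = a' ∧ b = b' := by
  intro L
  induction L with
  | nil =>
    intro L' a a' b b' h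
    cases L' with
    | nil => simp [LCtx.fill] at h; exact ⟨rfl, h.1, h.2⟩
    | cons hd tl => obtain ⟨q, v⟩ := hd; simp [LCtx.fill] at h
  | cons hd tl ih =>
    obtain ⟨q, v⟩ := hd
    intro L' a a' b b' h
    cases L' with
    | nil => simp [LCtx.fill] at h
    | cons hd' tl' =>
      obtain ⟨q', v'⟩ := hd'
      simp only [LCtx.fill, Term.sub.injEq] at h
      obtain ⟨h1, h2, h3⟩ := h
      obtain ⟨e1, e2, e3⟩ := ih tl' a a' b b' h1
      exact ⟨by rw [e1, h2, h3], e2, e3⟩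

lemma hnf_no_step {t u : Term} {k : Kind} (hn : HNF t) (hs : HeadStep k t u) : False := by
  induction hn generalizing u k with
  | tvar x => cases hs
  | tpair a b => cases hs
  | abs p _ ih => cases hs with | absC _ h => exact ih h
  | app v _ nabs ih =>
    cases hs with
    | beta _ => exact nabs ⟨_, _, _, rfl⟩
    | appC _ h _ => exact ih h
  | sub p q _ _ npair iht ihu =>
    cases hs with
    | hmatch _ _ => exact npair ⟨_, _, _, rfl⟩
    | subC _ _ h => exact iht h
    | subArg _ _ _ _ h => exact ihu h

/-- Determinism of head reduction: if t →h u₁ and t →h u₂ then u₁ = u₂. -/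
theorem headStep_deterministic {k₁ k₂ : Kind} {t u₁ u₂ : Term}
    (h₁ : HeadStep k₁ t u₁) (h₂ : HeadStep k₂ t u₂) : u₁ = u₂ := by
  induction h₁ generalizing k₂ u₂ with
  | @beta L p t u _ =>
    generalize he : LCtx.fill L (Term.abs p t) = a at h₂
    cases h₂ with
    | @beta L' p' t' u' _ =>
      obtain ⟨e1, e2, e3⟩ := fill_abs_inj L L' p p' t t' he
      subst e1; subst e2; subst e3; rfl
    | appC _ _ nabs => exact absurd ⟨L, p, t, he.symm⟩ nabs
  | @hmatch t L p₁ p₂ w₁ w₂ hn _ =>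
    generalize he : LCtx.fill L (Term.tpair w₁ w₂) = a at h₂
    cases h₂ with
    | @hmatch _ L' _ _ v₁ v₂ _ _ =>
      obtain ⟨e1, e2, e3⟩ := fill_pair_inj L L' w₁ v₁ w₂ v₂ he
      subst e1; subst e2; subst e3; rfl
    | subC _ _ h => exact absurd h (fun h => hnf_no_step hn h)
    | subArg _ _ _ npair _ => exact absurd ⟨L, w₁, w₂, he.symm⟩ npair
  | @esub t x u hn =>
    cases h₂ with
    | esub _ => rfl
    | subC _ _ h => exact absurd h (fun h => hnf_no_step hn h)
  | absC p _ ih =>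
    cases h₂ with
    | absC _ h => rw [ih h]
  | @appC _ t t' u _ nabs ih =>
    cases h₂ with
    | beta _ => exact absurd ⟨_, _, _, rfl⟩ nabs
    | appC _ h _ => rw [ih h]
  | @subC _ t t' p u h ih =>
    cases h₂ with
    | hmatch hn _ => exact absurd h (fun h => hnf_no_step hn h)
    | esub hn => exact absurd h (fun h => hnf_no_step hn h)
    | subC _ _ h2 => rw [ih h2]
    | subArg _ _ hn _ _ => exact absurd h (fun h => hnf_no_step hn h)
  | @subArg _ t u u' p q hn npair h ih =>
    cases h₂ with
    | hmatch _ _ => exact absurd ⟨_, _, _, rfl⟩ npair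
    | subC _ _ h2 => exact absurd h2 (fun h2 => hnf_no_step hn h2)
    | subArg _ _ _ _ h2 => rw [ih h2]
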